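/- arXiv:1710.07836 — 2 statements merged into one kernel-verified Lean document; each statement's English description precedes it below -/
import Mathlib

section
/- Let N be a rooted phylogenetic network on X. Then N is tree-based if and only if the vertex set of N can be partitioned into a set of pairwise vertex-disjoint directed paths, each of which ends at a leaf in X. -/
open Relation

/-- Out-degree of a vertex in a digraph given by its arc relation. -/
noncomputable def outDeg {V : Type*} (A : V → V → Prop) (v : V) : ℕ := {u | A v u}.ncard
/-- In-degree of a vertex in a digraph given by its arc relation. -/
noncomputable def inDeg {V : Type*} (A : V → V → Prop) (v : V) : ℕ := {u | A u v}.ncard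

/-- A rooted phylogenetic network on leaf set `X`. -/
structure PhyloNet (V : Type*) [Fintype V] [DecidableEq V] where
  Arc : V → V → Prop
  root : V
  X : Finset V
  acyclic : ∀ v, ¬ Relation.TransGen Arc v v
  reach : ∀ v, Relation.ReflTransGen Arc root v
  root_out : 1 ≤ outDeg Arc root
  leaf_iff : ∀ v, v ∈ X ↔ outDeg Arc v = 0
  leaf_in : ∀ v ∈ X, inDeg Arc v = 1
  internal : ∀ v, v ≠ root → v ∉ X →
    (inDeg Arc v = 1 ∧ 2 ≤ outDeg Arc v) ∨ (2 ≤ inDeg Arc v ∧ outDeg Arc v = 1)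

section Defs
variable {V : Type*} [Fintype V] [DecidableEq V]

/-- A reticulation: in-degree at least two. -/
def IsRetic (N : PhyloNet V) (v : V) : Prop := 2 ≤ inDeg N.Arc v
/-- A tree vertex: a non-leaf vertex of in-degree at most one. -/
def IsTreeVert (N : PhyloNet V) (v : V) : Prop := v ∉ N.X ∧ inDeg N.Arc v ≤ 1
/-- An omnian: a non-leaf vertex all of whose children are reticulations. -/
def IsOmnian (N : PhyloNet V) (v : V) : Prop := v ∉ N.X ∧ ∀ u, N.Arc v u → IsRetic N u
/-- A binary network: all in- and out-degrees are at most two. -/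
def IsBinary (N : PhyloNet V) : Prop := ∀ v : V, inDeg N.Arc v ≤ 2 ∧ outDeg N.Arc v ≤ 2

/-- A rooted spanning tree of `N` with the same root as `N`. -/
def IsRSTree (N : PhyloNet V) (T : V → V → Prop) : Prop :=
  (∀ u v, T u v → N.Arc u v) ∧ (∀ v, inDeg T v = 0 ↔ v = N.root) ∧
  (∀ v, v ≠ N.root → inDeg T v = 1)

/-- A support tree: a rooted spanning tree with the same root, all of whose leaves are in `X`. -/
def IsSupportTree (N : PhyloNet V) (T : V → V → Prop) : Prop :=
  IsRSTree N T ∧ ∀ v, outDeg T v = 0 → v ∈ N.X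

/-- Tree-based network. -/
def TreeBased (N : PhyloNet V) : Prop := ∃ T, IsSupportTree N T

/-- A (nonempty, repetition-free) directed path recorded as a list of vertices. -/
def IsPathIn (A : V → V → Prop) (p : List V) : Prop := p ≠ [] ∧ p.Chain' A ∧ p.Nodup
/-- The path ends at a vertex of `X`. -/
def EndsIn (X : Finset V) (p : List V) : Prop := ∃ x ∈ X, p.getLast? = some x
/-- Pairwise vertex-disjoint family of paths. -/
def PairwiseDisj (P : Finset (List V)) : Prop :=
  ∀ p ∈ P, ∀ q ∈ P, p ≠ q → ∀ v : V, v ∈ p → v ∉ q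
/-- A partition of the vertex set of `N` into vertex-disjoint directed paths
ending at leaves in `X`. -/
def IsPathPartition (N : PhyloNet V) (P : Finset (List V)) : Prop :=
  (∀ p ∈ P, IsPathIn N.Arc p ∧ EndsIn N.X p) ∧ PairwiseDisj P ∧ ∀ v : V, ∃ p ∈ P, v ∈ p

/-- A matching in the bipartite graph with edge set `E` (edges from a first copy of `V`
to a second copy of `V`), recorded as a set of edges no two of which share an endpoint. -/
def IsMatchingOn (E : V → V → Prop) (M : Finset (V × V)) : Prop :=
  (∀ e ∈ M, E e.1 e.2) ∧ ∀ e ∈ M, ∀ f ∈ M, (e.1 = f.1 ∨ e.2 = f.2) → e = f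

/-- Size of a maximum matching of the bipartite graph with edge set `E`. -/
noncomputable def maxMatching (E : V → V → Prop) : ℕ :=
  sSup {n | ∃ M : Finset (V × V), IsMatchingOn E M ∧ M.card = n}

/-- An antichain of vertices of `N`. -/
def AntichainIn (N : PhyloNet V) (S : Finset V) : Prop :=
  ∀ u ∈ S, ∀ v ∈ S, u ≠ v → ¬ Relation.TransGen N.Arc u v

/-- The antichain-to-leaf property: from every antichain there are pairwise
vertex-disjoint directed paths to leaves, one starting at each antichain element. -/
def AntichainToLeaf (N : PhyloNet V) : Prop :=
  ∀ S : Finset V, AntichainIn N S →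
    ∃ f : V → List V,
      (∀ s ∈ S, IsPathIn N.Arc (f s) ∧ (f s).head? = some s ∧ EndsIn N.X (f s)) ∧
      ∀ s ∈ S, ∀ t ∈ S, s ≠ t → ∀ v : V, v ∈ f s → v ∉ f t

/-- A temporal network: a real labelling strictly increasing along tree arcs and
constant along reticulation arcs. -/
def Temporal (N : PhyloNet V) : Prop :=
  ∃ l : V → ℝ, ∀ u v, N.Arc u v →
    (IsRetic N v → l u = l v) ∧ (¬ IsRetic N v → l u < l v)

/-- `N'` is a binary refinement of `N`, witnessed by the contraction map `φ`:
`N` is obtained from the binary network `N'` by contracting the arcs whose endpoints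
are identified by `φ`. -/
def IsBinRefinement {V' : Type*} [Fintype V'] [DecidableEq V']
    (N' : PhyloNet V') (N : PhyloNet V) (φ : V' → V) : Prop :=
  IsBinary N' ∧ Function.Surjective φ ∧ φ N'.root = N.root ∧
  N'.X.image φ = N.X ∧ Set.InjOn φ ↑N'.X ∧
  (∀ u v : V, N.Arc u v ↔ ∃ u' v', φ u' = u ∧ φ v' = v ∧ N'.Arc u' v' ∧ φ u' ≠ φ v') ∧
  (∀ a b : V', φ a = φ b →
    Relation.ReflTransGen (fun x y => (N'.Arc x y ∨ N'.Arc y x) ∧ φ x = φ y) a b)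

/-- Edge of the bipartite graph `B_N` between omnians and reticulations. -/
def BEdge (N : PhyloNet V) (o r : V) : Prop := IsOmnian N o ∧ IsRetic N r ∧ N.Arc o r
/-- Edge of the bipartite graph `Z_N` between tree vertices with a reticulation child
and reticulations. -/
def ZEdge (N : PhyloNet V) (t r : V) : Prop :=
  IsTreeVert N t ∧ (∃ r', N.Arc t r' ∧ IsRetic N r') ∧ IsRetic N r ∧ N.Arc t r

/-- `R_t`: reticulations with no reticulation parent. -/
def Rt (N : PhyloNet V) (v : V) : Prop := IsRetic N v ∧ ∀ u, N.Arc u v → ¬ IsRetic N u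
/-- `Q_t`: vertices with a child in `R_t`. -/
def Qt (N : PhyloNet V) (v : V) : Prop := ∃ r, N.Arc v r ∧ Rt N r
/-- Edge of the bipartite graph `J_N`. -/
def JEdge (N : PhyloNet V) (q r : V) : Prop := Qt N q ∧ Rt N r ∧ N.Arc q r

/-- A supporting set for `J_N`. -/
def IsSupportingSet (N : PhyloNet V) (E : Finset (V × V)) : Prop :=
  (∀ e ∈ E, JEdge N e.1 e.2) ∧
  (∀ q, Qt N q → IsOmnian N q → ∃ e ∈ E, e.1 = q) ∧
  (∀ r, Rt N r → ∃! e : V × V, e ∈ E ∧ e.2 = r)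

/-- An arboreal arc: `u` is a reticulation, or `v` is a tree vertex or a leaf. -/
def ArborealArc (N : PhyloNet V) (u v : V) : Prop :=
  N.Arc u v ∧ (IsRetic N u ∨ ¬ IsRetic N v)

/-- The number of support trees of `N`, identified with their arc sets. -/
noncomputable def supCount (N : PhyloNet V) : ℕ :=
  {A' : Finset (V × V) | IsSupportTree N (fun u v => (u, v) ∈ A')}.ncard

/-- The bipartite graph `J_N`, as a simple graph on `Q_t ∪ R_t`. -/
def Jgraph (N : PhyloNet V) : SimpleGraph {v : V // Qt N v ∨ Rt N v} where
  Adj a b := JEdge N a.1 b.1 ∨ JEdge N b.1 a.1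
  symm := ⟨by intro a b h; tauto⟩
  loopless := ⟨by
    rintro a (⟨_, _, h⟩ | ⟨_, _, h⟩) <;> exact N.acyclic _ (Relation.TransGen.single h)⟩

/-- Degree in `J_N`. -/
noncomputable def Jdeg (N : PhyloNet V) (a : {v : V // Qt N v ∨ Rt N v}) : ℕ :=
  ((Jgraph N).neighborSet a).ncard

end Defs

/-- A rooted tree (equivalently, a subdivision of a rooted tree): a rooted digraph
in which every non-root vertex has in-degree one and everything is reachable
from the root. -/
structure RootedDirTree (V : Type*) [Fintype V] [DecidableEq V] where
  Arc : V → V → Prop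
  root : V
  acyclic : ∀ v, ¬ Relation.TransGen Arc v v
  reach : ∀ v, Relation.ReflTransGen Arc root v
  root_in : inDeg Arc root = 0
  in_one : ∀ v, v ≠ root → inDeg Arc v = 1

/-! A support tree `T` becomes a path partition by keeping, at every vertex with a `T`-child, a
single outgoing `T`-arc: the kept arcs form a relation in which every vertex has at most one
predecessor and at most one successor, so its maximal paths partition the vertices, and each
ends at a `T`-leaf, hence at a leaf of `N`. Conversely, the consecutive pairs along the paths of
a partition give every vertex other than a first vertex a unique parent, and only the last
vertices, which are leaves, have no child; giving each first vertex except the root one parent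
arc of `N` yields a support tree. -/

namespace List

variable {α : Type*}

lemma Nodup.eq_of_append_cons_cons {l s s' t t' : List α} {a a' c : α}
    (hl : l.Nodup) (h : l = s ++ a :: c :: t) (h' : l = s' ++ a' :: c :: t') : a = a' := by
  classical
  have length_eq_idxOf : ∀ x y : List α, l = x ++ c :: y → x.length = l.idxOf c := by
    rintro x y rfl
    have hc : c ∉ x := fun hc => disjoint_of_nodup_append hl hc mem_cons_self
    simp [idxOf_append, hc]
  have e : (s ++ [a]) ++ c :: t = (s' ++ [a']) ++ c :: t' := by simpa [← h] using h'
  have hlen : (s ++ [a]).length = (s' ++ [a']).length :=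
    (length_eq_idxOf _ _ (by simpa using h)).trans (length_eq_idxOf _ _ (by simpa using h')).symm
  exact (concat_inj.1 (by simpa using (append_inj e hlen).1)).2

lemma getLast?_eq_or_exists_append_cons_cons {l : List α} {v : α} (hv : v ∈ l) :
    l.getLast? = some v ∨ ∃ w s t, l = s ++ v :: w :: t := by
  obtain ⟨s, t, rfl⟩ := List.mem_iff_append.1 hv
  rcases t with _ | ⟨w, t⟩
  · simp
  · exact Or.inr ⟨w, s, t, rfl⟩

end List

namespace Relation

variable {α : Type*}

lemma exists_rightUnique_le (R : α → α → Prop) :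
    ∃ S : α → α → Prop, (∀ a b, S a b → R a b) ∧ Relator.RightUnique S ∧
      ∀ a b, R a b → ∃ c, S a c :=
  ⟨fun a b => ∃ h : ∃ c, R a c, b = h.choose, fun _ _ ⟨h, hb⟩ => hb ▸ h.choose_spec,
    fun _ _ _ ⟨_, hb⟩ ⟨_, hc⟩ => hb.trans hc.symm, fun _ b hab => ⟨_, ⟨b, hab⟩, rfl⟩⟩

lemma eq_of_reflTransGen_of_forall_not {S : α → α → Prop} (hL : Relator.LeftUnique S)
    {a a' b : α} (ha : ∀ c, ¬ S c a) (ha' : ∀ c, ¬ S c a') (h : ReflTransGen S a b)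
    (h' : ReflTransGen S a' b) : a = a' := by
  have total := ReflTransGen.total_of_right_unique hL.flip
    (reflTransGen_swap.2 h) (reflTransGen_swap.2 h')
  rcases total with h | h
  · rcases (reflTransGen_swap.1 h).cases_tail with rfl | ⟨c, -, hc⟩
    · rfl
    · exact absurd hc (ha c)
  · rcases (reflTransGen_swap.1 h).cases_tail with rfl | ⟨c, -, hc⟩
    · rfl
    · exact absurd hc (ha' c)

variable [Finite α] {S : α → α → Prop}

lemma wellFounded_of_acyclic (hS : ∀ a, ¬ TransGen S a a) : WellFounded S :=
  have : Std.Irrefl (TransGen S) := ⟨hS⟩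
  (Finite.wellFounded_of_trans_of_irrefl (TransGen S)).mono fun _ _ => TransGen.single

lemma wellFounded_swap_of_acyclic (hS : ∀ a, ¬ TransGen S a a) :
    WellFounded (Function.swap S) :=
  wellFounded_of_acyclic fun a h => hS a (transGen_swap.1 h)

lemma exists_forall_not_reflTransGen (hS : ∀ a, ¬ TransGen S a a) (b : α) :
    ∃ a, (∀ c, ¬ S c a) ∧ ReflTransGen S a b := by
  obtain ⟨a, hab, hmin⟩ := (wellFounded_of_acyclic hS).has_min {a | ReflTransGen S a b} ⟨b, .refl⟩
  exact ⟨a, fun c hca => hmin c (.head hca hab) hca, hab⟩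

open Classical in
noncomputable def pathFrom (hS : ∀ a, ¬ TransGen S a a) : α → List α :=
  (wellFounded_swap_of_acyclic hS).fix fun a ih =>
    a :: if h : ∃ b, S a b then ih h.choose h.choose_spec else []

section pathFrom

variable (hS : ∀ a, ¬ TransGen S a a)

lemma pathFrom_of_forall_not {a : α} (ha : ∀ b, ¬ S a b) : pathFrom hS a = [a] := by
  rw [pathFrom, WellFounded.fix_eq, dif_neg (not_exists.2 ha)]

lemma exists_pathFrom_eq_cons {a : α} (ha : ∃ b, S a b) :
    ∃ b, S a b ∧ pathFrom hS a = a :: pathFrom hS b :=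
  ⟨ha.choose, ha.choose_spec, by rw [pathFrom, WellFounded.fix_eq, dif_pos ha]⟩

lemma pathFrom_induction {motive : α → List α → Prop} (last : ∀ a, (∀ b, ¬ S a b) → motive a [a])
    (cons : ∀ a b, S a b → motive b (pathFrom hS b) → motive a (a :: pathFrom hS b)) (a : α) :
    motive a (pathFrom hS a) := by
  induction a using (wellFounded_swap_of_acyclic hS).induction with
  | _ a ih =>
    by_cases ha : ∃ b, S a b
    · obtain ⟨b, hab, he⟩ := exists_pathFrom_eq_cons hS ha
      rw [he]
      exact cons a b hab (ih b hab)
    · rw [pathFrom_of_forall_not hS (not_exists.1 ha)]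
      exact last a (not_exists.1 ha)

lemma pathFrom_of_rel (hR : Relator.RightUnique S) {a b : α} (hab : S a b) :
    pathFrom hS a = a :: pathFrom hS b := by
  obtain ⟨c, hac, he⟩ := exists_pathFrom_eq_cons hS ⟨b, hab⟩
  rwa [hR hab hac]

lemma head?_pathFrom (a : α) : (pathFrom hS a).head? = some a :=
  pathFrom_induction hS (motive := fun a l => l.head? = some a) (fun _ _ => rfl)
    (fun _ _ _ _ => rfl) a

lemma isChain_pathFrom (a : α) : (pathFrom hS a).IsChain S :=
  pathFrom_induction hS (motive := fun _ l => l.IsChain S) (fun a _ => .singleton a)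
    (fun a b hab ih => List.isChain_cons.2 ⟨by simp [head?_pathFrom, hab], ih⟩) a

lemma getLast?_pathFrom (a : α) :
    ∃ x, (pathFrom hS a).getLast? = some x ∧ ∀ c, ¬ S x c :=
  pathFrom_induction hS (motive := fun _ l => ∃ x, l.getLast? = some x ∧ ∀ c, ¬ S x c)
    (fun a ha => ⟨a, rfl, ha⟩)
    (fun _ _ _ ⟨x, hx, hxc⟩ => ⟨x, by simp [List.getLast?_cons, hx], hxc⟩) a

lemma reflTransGen_of_mem_pathFrom {a b : α} (hb : b ∈ pathFrom hS a) : ReflTransGen S a b :=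
  pathFrom_induction hS (motive := fun a l => b ∈ l → ReflTransGen S a b)
    (fun a _ hb => by rw [List.mem_singleton.1 hb])
    (fun a c hac ih hb => by
      rcases List.mem_cons.1 hb with rfl | hb
      · exact .refl
      · exact .head hac (ih hb)) a hb

lemma nodup_pathFrom (a : α) : (pathFrom hS a).Nodup :=
  pathFrom_induction hS (motive := fun _ l => l.Nodup) (fun a _ => List.nodup_singleton a)
    (fun a _ hab ih => List.nodup_cons.2
      ⟨fun ha => hS a (.head' hab (reflTransGen_of_mem_pathFrom hS ha)), ih⟩) a

lemma mem_pathFrom_iff (hR : Relator.RightUnique S) {a b : α} :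
    b ∈ pathFrom hS a ↔ ReflTransGen S a b := by
  refine ⟨reflTransGen_of_mem_pathFrom hS, fun h => ?_⟩
  induction h using ReflTransGen.head_induction_on with
  | refl => exact List.mem_of_mem_head? (head?_pathFrom hS b)
  | head hac _ ih => exact pathFrom_of_rel hS hR hac ▸ List.mem_cons_of_mem _ ih

end pathFrom

theorem exists_pathCover [Fintype α] [DecidableEq α] (hS : ∀ a, ¬ TransGen S a a)
    (hL : Relator.LeftUnique S) (hR : Relator.RightUnique S) :
    ∃ P : Finset (List α),
      (∀ p ∈ P, p.IsChain S ∧ p.Nodup ∧ ∃ x, p.getLast? = some x ∧ ∀ c, ¬ S x c) ∧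
      PairwiseDisj P ∧ ∀ b, ∃ p ∈ P, b ∈ p := by
  classical
  refine ⟨(Finset.univ.filter fun a => ∀ c, ¬ S c a).image (pathFrom hS), ?_, ?_, ?_⟩
  · simp only [Finset.mem_image, forall_exists_index, and_imp]
    rintro _ a - rfl
    exact ⟨isChain_pathFrom hS a, nodup_pathFrom hS a, getLast?_pathFrom hS a⟩
  · simp only [PairwiseDisj, Finset.mem_image, Finset.mem_filter, Finset.mem_univ, true_and]
    rintro _ ⟨a, ha, rfl⟩ _ ⟨a', ha', rfl⟩ hne b hb hb'
    rw [mem_pathFrom_iff hS hR] at hb hb'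
    exact hne (congrArg _ (eq_of_reflTransGen_of_forall_not hL ha ha' hb hb'))
  · intro b
    obtain ⟨a, ha, hab⟩ := exists_forall_not_reflTransGen hS b
    exact ⟨pathFrom hS a, Finset.mem_image_of_mem _ (by simpa using ha),
      (mem_pathFrom_iff hS hR).2 hab⟩

end Relation

section Degree

variable {V : Type*} [Finite V]

lemma inDeg_le_one_iff {A : V → V → Prop} {v : V} :
    inDeg A v ≤ 1 ↔ ∀ u, A u v → ∀ u', A u' v → u = u' := by
  rw [inDeg, Set.ncard_le_one (Set.toFinite _)]
  rfl

lemma inDeg_eq_zero_iff {A : V → V → Prop} {v : V} : inDeg A v = 0 ↔ ∀ u, ¬ A u v := by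
  rw [inDeg, Set.ncard_eq_zero (Set.toFinite _), Set.eq_empty_iff_forall_notMem]
  rfl

lemma outDeg_eq_zero_iff {A : V → V → Prop} {v : V} : outDeg A v = 0 ↔ ∀ w, ¬ A v w := by
  rw [outDeg, Set.ncard_eq_zero (Set.toFinite _), Set.eq_empty_iff_forall_notMem]
  rfl

end Degree

namespace PhyloNet

variable {V : Type*} [Fintype V] [DecidableEq V] (N : PhyloNet V)

lemma not_arc_root (u : V) : ¬ N.Arc u N.root :=
  fun h => N.acyclic _ (.tail' (N.reach u) h)

lemma exists_arc_of_ne_root {v : V} (hv : v ≠ N.root) : ∃ u, N.Arc u v := by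
  rcases (N.reach v).cases_tail with h | ⟨u, -, hu⟩
  · exact absurd h hv
  · exact ⟨u, hu⟩

end PhyloNet

section Network

variable {V : Type*} [Fintype V] [DecidableEq V] (N : PhyloNet V)

lemma isRSTree_of_leftUnique {T : V → V → Prop} (hsub : ∀ u v, T u v → N.Arc u v)
    (hL : Relator.LeftUnique T) (hpar : ∀ v, v ≠ N.root → ∃ u, T u v) : IsRSTree N T := by
  have inDeg_eq_one : ∀ v, v ≠ N.root → inDeg T v = 1 := fun v hv => by
    obtain ⟨u, hu⟩ := hpar v hv
    exact Set.ncard_eq_one.2 ⟨u, Set.eq_singleton_iff_unique_mem.2 ⟨hu, fun _ hu' => hL hu' hu⟩⟩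
  refine ⟨hsub, fun v => ⟨fun h => ?_, ?_⟩, inDeg_eq_one⟩
  · by_contra hv
    exact one_ne_zero ((inDeg_eq_one v hv).symm.trans h)
  · rintro rfl
    exact inDeg_eq_zero_iff.2 fun u hu => N.not_arc_root u (hsub _ _ hu)

lemma IsRSTree.leftUnique {T : V → V → Prop} (hT : IsRSTree N T) : Relator.LeftUnique T := by
  intro u u' v hu hu'
  have : inDeg T v ≤ 1 := by
    by_cases hv : v = N.root
    · exact ((hT.2.1 v).2 hv).trans_le zero_le_one
    · exact (hT.2.2 v hv).le
  exact inDeg_le_one_iff.1 this u hu u' hu'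

theorem TreeBased.exists_leftUnique_rightUnique (h : TreeBased N) :
    ∃ S : V → V → Prop, (∀ u v, S u v → N.Arc u v) ∧ Relator.LeftUnique S ∧
      Relator.RightUnique S ∧ ∀ v, (∀ w, ¬ S v w) → v ∈ N.X := by
  obtain ⟨T, hT, hleaf⟩ := h
  obtain ⟨S, hST, hR, hdom⟩ := Relation.exists_rightUnique_le T
  refine ⟨S, fun u v h => hT.1 u v (hST u v h),
    fun _ _ _ hu hu' => IsRSTree.leftUnique N hT (hST _ _ hu) (hST _ _ hu'), hR,
    fun v hv => hleaf v (outDeg_eq_zero_iff.2 fun w hw => ?_)⟩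
  obtain ⟨c, hc⟩ := hdom v w hw
  exact hv c hc

theorem treeBased_of_leftUnique {S : V → V → Prop} (hsub : ∀ u v, S u v → N.Arc u v)
    (hL : Relator.LeftUnique S) (hX : ∀ v, (∀ w, ¬ S v w) → v ∈ N.X) : TreeBased N := by
  obtain ⟨Par, hPar, hParR, hParDom⟩ := Relation.exists_rightUnique_le (Function.swap N.Arc)
  let T u v := S u v ∨ (∀ u', ¬ S u' v) ∧ Par v u
  refine ⟨T, isRSTree_of_leftUnique N ?_ ?_ ?_,
    fun v hv => hX v fun w hw => outDeg_eq_zero_iff.1 hv w (Or.inl hw)⟩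
  · rintro u v (h | ⟨-, h⟩)
    · exact hsub u v h
    · exact hPar v u h
  · rintro u u' v (h | ⟨hn, h⟩) (h' | ⟨hn', h'⟩)
    · exact hL h h'
    · exact absurd h (hn' u)
    · exact absurd h' (hn u')
    · exact hParR h h'
  · intro v hv
    by_cases h : ∃ u, S u v
    · obtain ⟨u, hu⟩ := h
      exact ⟨u, Or.inl hu⟩
    · obtain ⟨u, hu⟩ := N.exists_arc_of_ne_root hv
      obtain ⟨c, hc⟩ := hParDom v u hu
      exact ⟨c, Or.inr ⟨not_exists.1 h, hc⟩⟩

theorem exists_pathPartition_of_leftUnique_rightUnique {S : V → V → Prop}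
    (hsub : ∀ u v, S u v → N.Arc u v) (hL : Relator.LeftUnique S)
    (hR : Relator.RightUnique S) (hX : ∀ v, (∀ w, ¬ S v w) → v ∈ N.X) :
    ∃ P, IsPathPartition N P := by
  obtain ⟨P, hpaths, hdisj, hcover⟩ :=
    Relation.exists_pathCover (fun a h => N.acyclic a (TransGen.mono hsub a a h)) hL hR
  refine ⟨P, fun p hp => ?_, hdisj, hcover⟩
  obtain ⟨hchain, hnodup, x, hx, hxS⟩ := hpaths p hp
  exact ⟨⟨by rintro rfl; simp at hx, hchain.imp fun u v h => hsub u v h, hnodup⟩, x, hX x hxS, hx⟩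

def pathAdj (P : Finset (List V)) (u v : V) : Prop := ∃ p ∈ P, ∃ s t, p = s ++ u :: v :: t

namespace IsPathPartition

variable {N} {P : Finset (List V)}

lemma arc_of_pathAdj (hP : IsPathPartition N P) {u v : V} (h : pathAdj P u v) : N.Arc u v := by
  obtain ⟨p, hp, s, t, rfl⟩ := h
  exact List.isChain_iff_forall_rel_of_append_cons_cons.1 (hP.1 _ hp).1.2.1 rfl

lemma leftUnique_pathAdj (hP : IsPathPartition N P) : Relator.LeftUnique (pathAdj P) := by
  rintro u u' v ⟨p, hp, s, t, hpe⟩ ⟨q, hq, s', t', hqe⟩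
  obtain rfl : p = q := by
    by_contra hne
    exact hP.2.1 p hp q hq hne v (by simp [hpe]) (by simp [hqe])
  exact (hP.1 p hp).1.2.2.eq_of_append_cons_cons hpe hqe

lemma mem_X_of_forall_not_pathAdj (hP : IsPathPartition N P) {v : V} (hv : ∀ w, ¬ pathAdj P v w) : v ∈ N.X := by
  obtain ⟨p, hp, hvp⟩ := hP.2.2 v
  rcases List.getLast?_eq_or_exists_append_cons_cons hvp with hl | ⟨w, s, t, he⟩
  · obtain ⟨x, hx, hxl⟩ := (hP.1 p hp).2
    rwa [Option.some_injective _ (hl.symm.trans hxl)]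
  · exact absurd ⟨p, hp, s, t, he⟩ (hv w)

end IsPathPartition

end Network

/-- tree-based iff the vertex set can be partitioned into
vertex-disjoint directed paths each ending at a leaf in `X`. -/
theorem stmt3 {V : Type*} [Fintype V] [DecidableEq V] (N : PhyloNet V) :
    TreeBased N ↔ ∃ P : Finset (List V), IsPathPartition N P := by
  constructor
  · intro h
    obtain ⟨S, hsub, hL, hR, hX⟩ := h.exists_leftUnique_rightUnique
    exact exists_pathPartition_of_leftUnique_rightUnique N hsub hL hR hX
  · rintro ⟨P, hP⟩
    exact treeBased_of_leftUnique N (fun _ _ => hP.arc_of_pathAdj) hP.leftUnique_pathAdj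
      fun _ => hP.mem_X_of_forall_not_pathAdj
end

section
/- Let N be a binary tree-based rooted phylogenetic network. Then every connected component of the bipartite graph J_N is either (i) a cycle, (ii) a path whose two end vertices are tree vertices of N neither of which is an omnian, or (iii) a path whose two end vertices are tree vertices of N exactly one of which is an omnian. -/
open Relation

/-!
A reticulation in `R_t` is adjacent in `J_N` exactly to its two parents, and a vertex of `Q_t`
to its one or two children in `R_t`; so in a component `C` the vertices of degree one all lie in
`Q_t`. Counting the edges of `C` from both sides gives `d₁ + 2|R| = 2|Q|`, where `d₁` is the
number of degree-one vertices and `Q`, `R` are the two sides of `C`, while connectivity gives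
`|Q| + |R| ≤ |E| + 1 = 2|R| + 1`. Hence `d₁ ∈ {0, 2}`: `C` is a cycle or a path with both ends
in `Q_t`. If both ends were omnians, every vertex of `Q` would be an omnian; in a support tree
each omnian then has a child in `R_t`, and uniqueness of tree parents makes this an injection
`Q → R`, so `|Q| ≤ |R|` and `d₁ = 0`.
-/

namespace SimpleGraph

variable {W : Type*} {G : SimpleGraph W}

theorem ConnectedComponent.ncard_neighborSet_toSimpleGraph (C : G.ConnectedComponent) (v : C) :
    (C.toSimpleGraph.neighborSet v).ncard = (G.neighborSet v).ncard :=
  Set.ncard_preimage_of_injective_subset_range Subtype.val_injective fun w hw =>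
    ⟨⟨w, C.mem_supp_of_adj_mem_supp v.2 hw⟩, rfl⟩

variable [Fintype W] [DecidableEq W] [DecidableRel G.Adj] {s : Finset W}

open Finset in
theorem IsBipartiteWith.card_degree_eq_one_add_two_mul_card_compl (h : G.IsBipartiteWith s ↑sᶜ)
    (hs : ∀ v ∈ s, G.degree v = 1 ∨ G.degree v = 2) (hsc : ∀ v ∉ s, G.degree v = 2) :
    #{v | G.degree v = 1} + 2 * #sᶜ = 2 * #s := by
  have hsum : ∑ v ∈ s, G.degree v = 2 * #sᶜ := by
    rw [isBipartiteWith_sum_degrees_eq h, sum_congr rfl fun v hv => hsc v (mem_compl.mp hv),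
      sum_const, smul_eq_mul, mul_comm]
  have hD : ({v | G.degree v = 1} : Finset W) = {v ∈ s | G.degree v = 1} := by
    ext v
    by_cases hv : v ∈ s <;> simp [hv, hsc]
  have hpair : ∑ v ∈ s, (G.degree v + if G.degree v = 1 then 1 else 0) = ∑ _v ∈ s, 2 :=
    sum_congr rfl fun v hv => by rcases hs v hv with h | h <;> simp [h]
  rw [sum_add_distrib, sum_boole, sum_const, smul_eq_mul] at hpair
  rw [hD]
  push_cast at hpair
  omega

theorem Connected.card_le_card_compl_add_one (hG : G.Connected) (h : G.IsBipartiteWith s ↑sᶜ)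
    (hsc : ∀ v ∉ s, G.degree v = 2) : s.card ≤ sᶜ.card + 1 := by
  have hE : G.edgeFinset.card = 2 * sᶜ.card := by
    rw [← isBipartiteWith_sum_degrees_eq_card_edges' h,
      Finset.sum_congr rfl fun v hv => hsc v (Finset.mem_compl.mp hv), Finset.sum_const,
      smul_eq_mul, mul_comm]
  have hV := hG.card_vert_le_card_edgeSet_add_one
  rw [Nat.card_eq_fintype_card, Nat.card_eq_fintype_card, ← edgeFinset_card, hE,
    ← Finset.card_add_card_compl s] at hV
  omega

end SimpleGraph

section Network

variable {V : Type*} [Fintype V] [DecidableEq V] {N : PhyloNet V}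

theorem PhyloNet.notMem_X_of_arc {u v : V} (h : N.Arc u v) : u ∉ N.X := fun hu =>
  ((Set.ncard_eq_zero).mp ((N.leaf_iff u).mp hu)).subset (show v ∈ {w | N.Arc u w} from h)

theorem PhyloNet.inDeg_root (N : PhyloNet V) : inDeg N.Arc N.root = 0 :=
  (Set.ncard_eq_zero).mpr <| Set.eq_empty_of_forall_notMem fun u h =>
    N.acyclic N.root (Relation.TransGen.tail' (N.reach u) h)

theorem IsRetic.ne_root {v : V} (h : IsRetic N v) : v ≠ N.root := by
  rintro rfl
  rw [IsRetic, N.inDeg_root] at h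
  omega

theorem IsRetic.outDeg_eq_one {v : V} (h : IsRetic N v) : outDeg N.Arc v = 1 := by
  have hv : v ∉ N.X := fun hv => by
    rw [IsRetic, N.leaf_in v hv] at h
    omega
  rcases N.internal v h.ne_root hv with ⟨h1, _⟩ | ⟨_, h1⟩
  · rw [IsRetic, h1] at h
    omega
  · exact h1

theorem Rt.not_qt {r : V} (h : Rt N r) : ¬ Qt N r := fun ⟨_, hrc, hc⟩ => hc.2 r hrc h.1

theorem Qt.not_isRetic {q : V} (h : Qt N q) : ¬ IsRetic N q :=
  let ⟨_, hqr, hr⟩ := h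
  hr.2 q hqr

theorem Qt.notMem_X {q : V} (h : Qt N q) : q ∉ N.X :=
  let ⟨_, hqr, _⟩ := h
  N.notMem_X_of_arc hqr

theorem jgraph_adj_iff_of_rt {a b : {v : V // Qt N v ∨ Rt N v}} (ha : Rt N a.1) :
    (Jgraph N).Adj a b ↔ N.Arc b.1 a.1 :=
  ⟨fun h => h.elim (fun h => absurd h.1 ha.not_qt) (·.2.2),
    fun h => Or.inr ⟨⟨a.1, h, ha⟩, ha, h⟩⟩

theorem jgraph_adj_iff_of_qt {a b : {v : V // Qt N v ∨ Rt N v}} (ha : Qt N a.1) :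
    (Jgraph N).Adj a b ↔ N.Arc a.1 b.1 ∧ Rt N b.1 :=
  ⟨fun h => h.elim (fun h => ⟨h.2.2, h.2.1⟩) (fun h => absurd ha h.2.1.not_qt),
    fun h => Or.inl ⟨ha, h.2, h.1⟩⟩

theorem jgraph_adj_qt_iff {a b : {v : V // Qt N v ∨ Rt N v}} (h : (Jgraph N).Adj a b) :
    Qt N a.1 ↔ ¬ Qt N b.1 := by
  rcases h with ⟨ha, hb, _⟩ | ⟨hb, ha, _⟩
  · exact iff_of_true ha hb.not_qt
  · exact iff_of_false ha.not_qt (not_not_intro hb)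

theorem jdeg_eq_two_of_rt (hb : IsBinary N) {a : {v : V // Qt N v ∨ Rt N v}} (ha : Rt N a.1) :
    Jdeg N a = 2 := by
  have himg : Subtype.val '' (Jgraph N).neighborSet a = {u | N.Arc u a.1} := by
    ext u
    refine ⟨fun ⟨b, hab, hb⟩ => hb ▸ (jgraph_adj_iff_of_rt ha).mp hab, fun h => ?_⟩
    exact ⟨⟨u, Or.inl ⟨a.1, h, ha⟩⟩, (jgraph_adj_iff_of_rt ha).mpr h, rfl⟩
  rw [Jdeg, ← Set.ncard_image_of_injective _ Subtype.val_injective, himg]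
  exact le_antisymm (hb a.1).1 ha.1

theorem jdeg_eq_ncard_of_qt {a : {v : V // Qt N v ∨ Rt N v}} (ha : Qt N a.1) :
    Jdeg N a = {u | N.Arc a.1 u ∧ Rt N u}.ncard := by
  have himg : Subtype.val '' (Jgraph N).neighborSet a = {u | N.Arc a.1 u ∧ Rt N u} := by
    ext u
    refine ⟨fun ⟨b, hab, hb⟩ => hb ▸ (jgraph_adj_iff_of_qt ha).mp hab, fun h => ?_⟩
    exact ⟨⟨u, Or.inr h.2⟩, (jgraph_adj_iff_of_qt ha).mpr h, rfl⟩
  rw [Jdeg, ← Set.ncard_image_of_injective _ Subtype.val_injective, himg]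

theorem jdeg_eq_one_or_two_of_qt (hb : IsBinary N) {a : {v : V // Qt N v ∨ Rt N v}}
    (ha : Qt N a.1) : Jdeg N a = 1 ∨ Jdeg N a = 2 := by
  obtain ⟨r, har, hr⟩ := ha
  have hpos : 0 < {u | N.Arc a.1 u ∧ Rt N u}.ncard := (Set.ncard_pos).mpr ⟨r, har, hr⟩
  have hle : {u | N.Arc a.1 u ∧ Rt N u}.ncard ≤ 2 :=
    (Set.ncard_le_ncard fun _ h => h.1).trans (hb a.1).2
  rw [jdeg_eq_ncard_of_qt ⟨r, har, hr⟩]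
  omega

theorem isOmnian_of_jdeg_eq_two (hb : IsBinary N) {a : {v : V // Qt N v ∨ Rt N v}}
    (ha : Qt N a.1) (h2 : Jdeg N a = 2) : IsOmnian N a.1 := by
  rw [jdeg_eq_ncard_of_qt ha] at h2
  have heq : {u | N.Arc a.1 u ∧ Rt N u} = {u | N.Arc a.1 u} :=
    Set.eq_of_subset_of_ncard_le (fun _ h => h.1) (h2 ▸ (hb a.1).2)
  refine ⟨ha.notMem_X, fun u hu => ?_⟩
  have hu' : u ∈ {u | N.Arc a.1 u ∧ Rt N u} := heq ▸ hu
  exact hu'.2.1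

theorem jdeg_eq_one_or_two (hb : IsBinary N) (a : {v : V // Qt N v ∨ Rt N v}) :
    Jdeg N a = 1 ∨ Jdeg N a = 2 :=
  a.2.elim (jdeg_eq_one_or_two_of_qt hb) (Or.inr ∘ jdeg_eq_two_of_rt hb)

theorem qt_of_jdeg_eq_one (hb : IsBinary N) {a : {v : V // Qt N v ∨ Rt N v}}
    (h : Jdeg N a = 1) : Qt N a.1 :=
  a.2.resolve_right fun hr => by
    rw [jdeg_eq_two_of_rt hb hr] at h
    omega

theorem IsSupportTree.parent_unique {T : V → V → Prop} (hT : IsSupportTree N T) {v p q : V}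
    (hv : v ≠ N.root) (hp : T p v) (hq : T q v) : p = q :=
  (Set.ncard_le_one).mp (hT.1.2.2 v hv).le p hp q hq

theorem IsSupportTree.exists_child {T : V → V → Prop} (hT : IsSupportTree N T) {v : V}
    (hv : v ∉ N.X) : ∃ c, T v c := by
  by_contra! h
  exact hv (hT.2 v ((Set.ncard_eq_zero).mpr (Set.eq_empty_of_forall_notMem h)))

theorem IsSupportTree.exists_rt_child_of_isOmnian {T : V → V → Prop} (hT : IsSupportTree N T)
    {q : V} (hq : Qt N q) (ho : IsOmnian N q) :
    ∃ r, Rt N r ∧ N.Arc q r ∧ T q r := by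
  obtain ⟨c, hqc⟩ := hT.exists_child ho.1
  have hc : IsRetic N c := ho.2 c (hT.1.1 q c hqc)
  refine ⟨c, ⟨hc, fun p hpc hp => hq.not_isRetic ?_⟩, hT.1.1 q c hqc, hqc⟩
  -- a reticulation has a single child, so its tree child must be `c`
  obtain ⟨c', hpc'⟩ := hT.exists_child (N.notMem_X_of_arc hpc)
  have hc' : c' = c := (Set.ncard_le_one).mp hp.outDeg_eq_one.le c' (hT.1.1 p c' hpc') c hpc
  rw [← hT.parent_unique hc.ne_root (hc' ▸ hpc') hqc]
  exact hp

section Component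

variable (C : (Jgraph N).ConnectedComponent)

theorem degree_toSimpleGraph_eq_jdeg (v : C) [Fintype (C.toSimpleGraph.neighborSet v)] :
    C.toSimpleGraph.degree v = Jdeg N v.1 := by
  rw [← SimpleGraph.card_neighborSet_eq_degree, ← Nat.card_eq_fintype_card,
    Nat.card_coe_set_eq, C.ncard_neighborSet_toSimpleGraph, Jdeg]

theorem isBipartiteWith_toSimpleGraph_qt [Fintype C] [DecidablePred fun v : C => Qt N v.1.1] :
    C.toSimpleGraph.IsBipartiteWith ↑({v | Qt N v.1.1} : Finset C)
      ↑({v | Qt N v.1.1} : Finset C)ᶜ := by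
  refine ⟨by rw [Finset.coe_compl]; exact disjoint_compl_right, fun v w hvw => ?_⟩
  have := jgraph_adj_qt_iff (show (Jgraph N).Adj v.1 w.1 from hvw)
  by_cases hv : Qt N v.1.1 <;> simp_all

theorem card_jdeg_eq_one_add_two_mul_card_compl [Fintype C]
    [DecidablePred fun v : C => Qt N v.1.1] [DecidablePred fun v : C => Jdeg N v.1 = 1]
    (hb : IsBinary N) :
    ({v | Jdeg N v.1 = 1} : Finset C).card + 2 * ({v | Qt N v.1.1} : Finset C)ᶜ.card =
      2 * ({v | Qt N v.1.1} : Finset C).card := by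
  classical
  have := (isBipartiteWith_toSimpleGraph_qt C).card_degree_eq_one_add_two_mul_card_compl
    (fun v _ => degree_toSimpleGraph_eq_jdeg C v ▸ jdeg_eq_one_or_two hb v.1)
    (fun v hv => degree_toSimpleGraph_eq_jdeg C v ▸
      jdeg_eq_two_of_rt hb (v.1.2.resolve_left (by simpa using hv)))
  simpa only [degree_toSimpleGraph_eq_jdeg] using this

theorem card_qt_le_card_compl_add_one [Fintype C] [DecidablePred fun v : C => Qt N v.1.1]
    (hb : IsBinary N) :
    ({v | Qt N v.1.1} : Finset C).card ≤ ({v | Qt N v.1.1} : Finset C)ᶜ.card + 1 := by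
  classical
  exact C.connected_toSimpleGraph.card_le_card_compl_add_one
    (isBipartiteWith_toSimpleGraph_qt C) fun v hv => degree_toSimpleGraph_eq_jdeg C v ▸
      jdeg_eq_two_of_rt hb (v.1.2.resolve_left (by simpa using hv))

end Component

theorem IsSupportTree.card_qt_le_card_compl_of_forall_isOmnian {T : V → V → Prop}
    (hT : IsSupportTree N T) (C : (Jgraph N).ConnectedComponent) [Fintype C]
    [DecidablePred fun v : C => Qt N v.1.1]
    (h : ∀ v : C, Qt N v.1.1 → IsOmnian N v.1.1) :
    ({v | Qt N v.1.1} : Finset C).card ≤ ({v | Qt N v.1.1} : Finset C)ᶜ.card := by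
  refine Finset.card_le_card_of_forall_subsingleton (fun q r : C => T q.1.1 r.1.1)
    (fun q hq => ?_) (fun r hr q₁ hq₁ q₂ hq₂ => ?_)
  · have hq : Qt N q.1.1 := (Finset.mem_filter.mp hq).2
    obtain ⟨r, hr, hqr, hT⟩ := hT.exists_rt_child_of_isOmnian hq (h q hq)
    have hadj : (Jgraph N).Adj q.1 ⟨r, Or.inr hr⟩ := (jgraph_adj_iff_of_qt hq).mpr ⟨hqr, hr⟩
    exact ⟨⟨_, C.mem_supp_of_adj_mem_supp q.2 hadj⟩, by simpa using hr.not_qt, hT⟩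
  · have hrt : Rt N r.1.1 := r.1.2.resolve_left (by simpa using hr)
    exact Subtype.ext <| Subtype.ext <| hT.parent_unique hrt.1.ne_root hq₁.2 hq₂.2

theorem IsSupportTree.not_isOmnian_and_isOmnian_of_ends_eq_pair {T : V → V → Prop}
    (hT : IsSupportTree N T) (hb : IsBinary N) (C : (Jgraph N).ConnectedComponent) [Fintype C]
    [DecidablePred fun v : C => Qt N v.1.1] [DecidablePred fun v : C => Jdeg N v.1 = 1]
    {a b : C} (hab : a ≠ b) (hends : ({v | Jdeg N v.1 = 1} : Finset C) = {a, b}) :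
    ¬ (IsOmnian N a.1.1 ∧ IsOmnian N b.1.1) := by
  rintro ⟨hoa, hob⟩
  have hall (v : C) (hv : Qt N v.1.1) : IsOmnian N v.1.1 := by
    rcases jdeg_eq_one_or_two hb v.1 with h | h
    · have hv' : v ∈ ({v | Jdeg N v.1 = 1} : Finset C) := by simpa using h
      rw [hends] at hv'
      obtain rfl | rfl : v = a ∨ v = b := by simpa using hv'
      exacts [hoa, hob]
    · exact isOmnian_of_jdeg_eq_two hb hv h
  have hcount := card_jdeg_eq_one_add_two_mul_card_compl C hb
  rw [hends, Finset.card_pair hab] at hcount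
  have := hT.card_qt_le_card_compl_of_forall_isOmnian C hall
  omega

end Network

/-- in a binary tree-based network, every connected component of `J_N`
is a cycle (all degrees two), or a path whose two end vertices are non-omnian tree
vertices, or a path whose end vertices are tree vertices exactly one of which is an omnian. -/
theorem stmt18 {V : Type*} [Fintype V] [DecidableEq V] (N : PhyloNet V)
    (hb : IsBinary N) (ht : TreeBased N) :
    ∀ C : (Jgraph N).ConnectedComponent,
      (∀ a ∈ C.supp, Jdeg N a = 2) ∨
      (∃ a b, a ∈ C.supp ∧ b ∈ C.supp ∧ a ≠ b ∧
        (∀ v ∈ C.supp, Jdeg N v ≤ 2) ∧ Jdeg N a = 1 ∧ Jdeg N b = 1 ∧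
        (∀ v ∈ C.supp, Jdeg N v = 1 → v = a ∨ v = b) ∧
        a.1 ∉ N.X ∧ ¬ IsRetic N a.1 ∧ b.1 ∉ N.X ∧ ¬ IsRetic N b.1 ∧
        ((¬ IsOmnian N a.1 ∧ ¬ IsOmnian N b.1) ∨
         (IsOmnian N a.1 ∧ ¬ IsOmnian N b.1) ∨
         (¬ IsOmnian N a.1 ∧ IsOmnian N b.1))) := by
  classical
  obtain ⟨T, hT⟩ := ht
  intro C
  have hcount := card_jdeg_eq_one_add_two_mul_card_compl C hb
  have hle := card_qt_le_card_compl_add_one C hb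
  obtain hD | hD : ({v | Jdeg N v.1 = 1} : Finset C).card = 0 ∨
      ({v | Jdeg N v.1 = 1} : Finset C).card = 2 := by omega
  · refine Or.inl fun a ha => (jdeg_eq_one_or_two hb a).resolve_left ?_
    exact Finset.card_filter_eq_zero_iff.mp hD ⟨a, ha⟩ (Finset.mem_univ _)
  · obtain ⟨a, b, hab, hends⟩ := Finset.card_eq_two.mp hD
    have hend (v : C) : Jdeg N v.1 = 1 ↔ v = a ∨ v = b := by
      simpa using congrArg (v ∈ ·) hends
    have haQ := qt_of_jdeg_eq_one hb ((hend a).mpr (Or.inl rfl))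
    have hbQ := qt_of_jdeg_eq_one hb ((hend b).mpr (Or.inr rfl))
    refine Or.inr ⟨a, b, a.2, b.2, fun h => hab (Subtype.ext h),
      fun v _ => (jdeg_eq_one_or_two hb v).elim (·.le.trans one_le_two) (·.le),
      (hend a).mpr (Or.inl rfl), (hend b).mpr (Or.inr rfl), fun v hv h1 => ?_,
      haQ.notMem_X, haQ.not_isRetic, hbQ.notMem_X, hbQ.not_isRetic, ?_⟩
    · exact ((hend ⟨v, hv⟩).mp h1).imp (congrArg Subtype.val) (congrArg Subtype.val)
    · have := hT.not_isOmnian_and_isOmnian_of_ends_eq_pair hb C hab hends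
      tauto
end
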